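/- Let L be a linear Lagrangian relation on V and V₀ a coisotropic subspace with V₁ = V₀^⊥. Then L ∩ (V₀×V₀) is invariant under translation by V₁×V₁ if and only if L ⊆ V₀×V₀ (equivalently, V₁×V₁ ⊆ L). -/

import Mathlib

open Module Submodule

variable {V : Type} [AddCommGroup V] [Module ℂ V]

/-- The form `B((v,w),(v',w')) = ⟨v|v'⟩ − ⟨w|w'⟩` on `V × V`. -/
noncomputable def BB (b : LinearMap.BilinForm ℂ V) : LinearMap.BilinForm ℂ (V × V) :=
  LinearMap.mk₂ ℂ (fun p q => b p.1 q.1 - b p.2 q.2)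
    (by intros; simp; ring)
    (by intros; simp; ring)
    (by intros; simp; ring)
    (by intros; simp; ring)

/-- A linear relation `L ⊆ V × V` is isotropic if `B` vanishes on it. -/
def IsIsotropicRel (b : LinearMap.BilinForm ℂ V) (L : Submodule ℂ (V × V)) : Prop :=
  ∀ p ∈ L, ∀ q ∈ L, BB b p q = 0

/-- A linear Lagrangian relation: an isotropic subspace of `V × V` of dimension `dim V`. -/
def IsLagrangianRel [FiniteDimensional ℂ V] (b : LinearMap.BilinForm ℂ V)
    (L : Submodule ℂ (V × V)) : Prop :=
  IsIsotropicRel b L ∧ finrank ℂ L = finrank ℂ V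

/-- Composition of linear relations: `rcomp L L' = L' ∘ L = {(x,z) | ∃ y, (x,y) ∈ L, (y,z) ∈ L'}`. -/
def rcomp (L L' : Submodule ℂ (V × V)) : Submodule ℂ (V × V) where
  carrier := {p | ∃ y, (p.1, y) ∈ L ∧ (y, p.2) ∈ L'}
  add_mem' := fun ⟨y, h1, h2⟩ ⟨y', h1', h2'⟩ => ⟨y + y', L.add_mem h1 h1', L'.add_mem h2 h2'⟩
  zero_mem' := ⟨0, L.zero_mem, L'.zero_mem⟩
  smul_mem' := fun c p ⟨y, h1, h2⟩ => ⟨c • y, L.smul_mem c h1, L'.smul_mem c h2⟩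

/-!
`V₁ × V₁` is the `B`-orthogonal of `V₀ × V₀`, and `L` is its own `B`-orthogonal, so taking
orthogonals turns `V₁ × V₁ ≤ L` into `L ≤ V₀ × V₀`. Translation invariance of `L ∩ (V₀ × V₀)`
applied at `0` gives `V₁ × V₁ ≤ L`; conversely, translations by elements of `V₁ × V₁ ≤ L` preserve
`L`, and they preserve `V₀ × V₀` because `V₀` is coisotropic.
-/

namespace LinearMap.BilinForm

variable {K E : Type*} [Field K] [AddCommGroup E] [Module K E] [FiniteDimensional K E]
  {B : LinearMap.BilinForm K E}

theorem le_iff_le_orthogonal_of_orthogonal_eq_self (hB : B.Nondegenerate) (hB₀ : B.IsRefl)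
    {L : Submodule K E} (hL : B.orthogonal L = L) (W : Submodule K E) :
    W ≤ L ↔ L ≤ B.orthogonal W := by
  constructor
  · intro h
    simpa only [hL] using orthogonal_le (B := B) h
  · intro h
    simpa only [hL, orthogonal_orthogonal hB hB₀] using orthogonal_le (B := B) h

end LinearMap.BilinForm

theorem BB_apply (b : LinearMap.BilinForm ℂ V) (p q : V × V) :
    BB b p q = b p.1 q.1 - b p.2 q.2 := rfl

theorem isSymm_BB {b : LinearMap.BilinForm ℂ V} (hb : b.IsSymm) : (BB b).IsSymm :=
  ⟨fun p q => by simp only [BB_apply, hb.eq]⟩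

theorem nondegenerate_BB {b : LinearMap.BilinForm ℂ V} (hb : b.Nondegenerate) :
    (BB b).Nondegenerate := by
  refine ⟨fun p hp => Prod.ext ?_ ?_, fun p hp => Prod.ext ?_ ?_⟩
  · exact hb.1 p.1 fun v => by simpa [BB_apply] using hp (v, 0)
  · exact hb.1 p.2 fun v => by simpa [BB_apply] using hp (0, v)
  · exact hb.2 p.1 fun v => by simpa [BB_apply] using hp (v, 0)
  · exact hb.2 p.2 fun v => by simpa [BB_apply] using hp (0, v)

theorem orthogonal_prod_BB (b : LinearMap.BilinForm ℂ V) (W : Submodule ℂ V) :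
    (BB b).orthogonal (W.prod W) = (b.orthogonal W).prod (b.orthogonal W) := by
  ext ⟨x, y⟩
  constructor
  · intro h
    refine ⟨fun v hv => ?_, fun w hw => ?_⟩
    · simpa [BB_apply] using h (v, 0) ⟨hv, W.zero_mem⟩
    · simpa [BB_apply] using h (0, w) ⟨W.zero_mem, hw⟩
  · rintro ⟨hx, hy⟩ ⟨v, w⟩ ⟨hv, hw⟩
    simp [BB_apply, (hx v hv : b v x = 0), (hy w hw : b w y = 0)]

theorem IsLagrangianRel.orthogonal_eq [FiniteDimensional ℂ V] {b : LinearMap.BilinForm ℂ V}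
    (hb : b.Nondegenerate) {L : Submodule ℂ (V × V)} (hL : IsLagrangianRel b L) :
    (BB b).orthogonal L = L := by
  have hle : L ≤ (BB b).orthogonal L := fun q hq p hp => hL.1 p hp q hq
  refine (Submodule.eq_of_le_of_finrank_le hle ?_).symm
  rw [LinearMap.BilinForm.finrank_orthogonal (nondegenerate_BB hb), finrank_prod, hL.2]
  omega

/-- For a linear Lagrangian relation `L` and a coisotropic subspace `V₀` with
`V₁ = V₀^⊥`: the intersection `L ∩ (V₀ × V₀)` is invariant under translation by
`V₁ × V₁` iff `L ⊆ V₀ × V₀`. -/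
theorem stmt14 {V : Type} [AddCommGroup V] [Module ℂ V] [FiniteDimensional ℂ V]
    (b : LinearMap.BilinForm ℂ V) (hsymm : b.IsSymm) (hnd : b.Nondegenerate)
    (L : Submodule ℂ (V × V)) (hL : IsLagrangianRel b L)
    (V₀ : Submodule ℂ V) (hco : b.orthogonal V₀ ≤ V₀) :
    (∀ p ∈ L ⊓ Submodule.prod V₀ V₀,
       ∀ q ∈ Submodule.prod (b.orthogonal V₀) (b.orthogonal V₀),
         p + q ∈ L ⊓ Submodule.prod V₀ V₀) ↔
      L ≤ Submodule.prod V₀ V₀ := by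
  have hnd' := nondegenerate_BB hnd
  have hrefl := (isSymm_BB hsymm).isRefl
  have hV₁_le_iff : (b.orthogonal V₀).prod (b.orthogonal V₀) ≤ L ↔ L ≤ V₀.prod V₀ := by
    rw [LinearMap.BilinForm.le_iff_le_orthogonal_of_orthogonal_eq_self hnd' hrefl
      (hL.orthogonal_eq hnd), ← orthogonal_prod_BB,
      LinearMap.BilinForm.orthogonal_orthogonal hnd' hrefl]
  rw [← hV₁_le_iff]
  constructor
  · intro h q hq
    simpa using (h 0 (zero_mem _) q hq).1
  · intro h p hp q hq
    exact ⟨L.add_mem hp.1 (h hq), (V₀.prod V₀).add_mem hp.2 ⟨hco hq.1, hco hq.2⟩⟩
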